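/- arXiv:1908.05559 — 10 statements merged into one kernel-verified Lean document; each statement's English description precedes it below -/
import Mathlib

section
/- The power tower sequence for base x = √2, i.e. the sequence defined by y₁ = √2 and y_{n+1} = (√2)^{y_n} (real exponentiation), converges to 2. -/
lemma powerTower_key (t : ℝ) (ht : t ≤ 2) :
    2 - Real.sqrt 2 ^ t ≤ (2 - t) * Real.log 2 := by
  have h2 : (0:ℝ) < Real.sqrt 2 := Real.sqrt_pos.mpr (by norm_num)
  have hc : Real.log (Real.sqrt 2) = Real.log 2 / 2 := by
    rw [Real.log_sqrt (by norm_num)]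
  have hrpow : Real.sqrt 2 ^ t = Real.exp (t * (Real.log 2 / 2)) := by
    rw [Real.rpow_def_of_pos h2, hc, mul_comm]
  have h2exp : (2:ℝ) = Real.exp (2 * (Real.log 2 / 2)) := by
    rw [show (2:ℝ) * (Real.log 2 / 2) = Real.log 2 by ring,
      Real.exp_log (by norm_num)]
  set c := Real.log 2 / 2 with hc'
  have hcpos : 0 < c := by
    have := Real.log_pos (by norm_num : (1:ℝ) < 2)
    positivity
  -- 1 - exp(v) ≤ -v  with v = (t-2)*c ≤ 0
  have hv : (t - 2) * c + 1 ≤ Real.exp ((t - 2) * c) := Real.add_one_le_exp _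
  have hfact : Real.sqrt 2 ^ t = 2 * Real.exp ((t - 2) * c) := by
    rw [hrpow]
    nth_rewrite 1 [h2exp]
    rw [← Real.exp_add]
    ring_nf
  rw [hfact]
  have : 2 - 2 * Real.exp ((t - 2) * c) ≤ 2 * ((2 - t) * c) := by nlinarith
  calc 2 - 2 * Real.exp ((t - 2) * c) ≤ 2 * ((2 - t) * c) := this
    _ = (2 - t) * Real.log 2 := by rw [hc']; ring

/-- The power tower sequence with base `√2`, i.e. `y₁ = √2`,
`y_{n+1} = (√2)^(y_n)` (real exponentiation), converges to `2`. -/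
theorem powerTower_sqrt_two_tendsto_two
    (y : ℕ → ℝ) (h1 : y 1 = Real.sqrt 2)
    (hrec : ∀ n, 1 ≤ n → y (n + 1) = Real.sqrt 2 ^ y n) :
    Filter.Tendsto y Filter.atTop (nhds 2) := by
  have hs2 : (1:ℝ) ≤ Real.sqrt 2 := by
    rw [show (1:ℝ) = Real.sqrt 1 from (Real.sqrt_one).symm]
    exact Real.sqrt_le_sqrt (by norm_num)
  have hs2le : Real.sqrt 2 ≤ 2 := by
    nlinarith [Real.sq_sqrt (by norm_num : (0:ℝ) ≤ 2), Real.sqrt_nonneg 2]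
  have hpow2 : Real.sqrt 2 ^ (2:ℝ) = 2 := by
    rw [show (2:ℝ) = ((2:ℕ):ℝ) by norm_num, Real.rpow_natCast]
    exact Real.sq_sqrt (by norm_num)
  set r := Real.log 2 with hr
  have hr0 : 0 < r := Real.log_pos (by norm_num)
  have hr1 : r < 1 := by
    have := Real.log_two_lt_d9
    linarith
  -- main induction
  have key : ∀ n, 1 ≤ n → y n ≤ 2 ∧ 2 - y n ≤ (2 - Real.sqrt 2) * r ^ (n - 1) := by
    intro n hn
    induction n, hn using Nat.le_induction with
    | base => simp [h1]
    | succ n hn ih =>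
      obtain ⟨hle, hbd⟩ := ih
      have hy : y (n + 1) = Real.sqrt 2 ^ y n := hrec n hn
      constructor
      · have := Real.rpow_le_rpow_of_exponent_le hs2 hle
        rw [hpow2] at this
        rw [hy]; exact this
      · have h1' : 2 - y (n + 1) ≤ (2 - y n) * r := by
          rw [hy]; exact powerTower_key _ hle
        have h2' : (2 - y n) * r ≤ (2 - Real.sqrt 2) * r ^ (n - 1) * r :=
          mul_le_mul_of_nonneg_right hbd hr0.le
        have hn1 : n + 1 - 1 = n - 1 + 1 := by omega
        rw [hn1, pow_succ]
        linarith
  -- squeeze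
  have hlow : Filter.Tendsto (fun n => 2 - (2 - Real.sqrt 2) * r ^ (n - 1))
      Filter.atTop (nhds 2) := by
    have hp : Filter.Tendsto (fun n : ℕ => r ^ (n - 1)) Filter.atTop (nhds 0) := by
      exact (tendsto_pow_atTop_nhds_zero_of_lt_one hr0.le hr1).comp
        (Filter.tendsto_sub_atTop_nat 1)
    have := (hp.const_mul (2 - Real.sqrt 2)).const_sub 2
    simpa using this
  refine tendsto_of_tendsto_of_tendsto_of_le_of_le' hlow tendsto_const_nhds ?_ ?_
  · filter_upwards [Filter.eventually_ge_atTop 1] with n hn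
    linarith [(key n hn).2]
  · filter_upwards [Filter.eventually_ge_atTop 1] with n hn
    exact (key n hn).1
end

section
/- For base x = 3^{1/3}, the power tower sequence y₁ = x, y_{n+1} = x^{y_n} converges to a limit L satisfying x^L = L and L ≤ e; in particular the limit is not equal to 3 (even though 3 also satisfies x^3 = 3). -/
/-- For base `x = 3^(1/3)`, the power tower sequence `y₁ = x`,
`y_{n+1} = x^(y_n)` converges to a limit `L` with `x^L = L` and `L ≤ e`;
in particular `L ≠ 3` (even though `x^3 = 3` also holds). -/
theorem powerTower_cbrt_three
    (x : ℝ) (hx : x = (3 : ℝ) ^ ((1 : ℝ) / 3))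
    (y : ℕ → ℝ) (h1 : y 1 = x)
    (hrec : ∀ n, 1 ≤ n → y (n + 1) = x ^ y n) :
    ∃ L : ℝ, Filter.Tendsto y Filter.atTop (nhds L) ∧
      x ^ L = L ∧ L ≤ Real.exp 1 ∧ L ≠ 3 := by
  have hx0 : (0:ℝ) < x := by rw [hx]; positivity
  have hx1 : (1:ℝ) ≤ x := by
    rw [hx]; exact Real.one_le_rpow (by norm_num) (by norm_num)
  set z : ℕ → ℝ := fun n => y (n + 1) with hzdef
  have hzrec : ∀ n, z (n + 1) = x ^ z n := fun n => hrec (n + 1) (by omega)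
  have hz0 : z 0 = x := h1
  -- key numeric bound : x ^ (27/10) ≤ 27/10
  have hxe : x ^ ((27:ℝ)/10) = (3:ℝ) ^ ((9:ℝ)/10) := by
    rw [hx, ← Real.rpow_mul (by norm_num)]; norm_num
  have hkey : x ^ ((27:ℝ)/10) ≤ 27/10 := by
    rw [hxe]
    have hbase : ((3:ℝ)^(9:ℕ)) ≤ ((27:ℝ)/10)^(10:ℕ) := by norm_num
    have h10 : ((3:ℝ)^(9:ℕ)) ^ ((1:ℝ)/10) ≤ (((27:ℝ)/10)^(10:ℕ)) ^ ((1:ℝ)/10) :=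
      Real.rpow_le_rpow (by positivity) hbase (by norm_num)
    rw [← Real.rpow_natCast 3 9, ← Real.rpow_natCast ((27:ℝ)/10) 10,
      ← Real.rpow_mul (by norm_num), ← Real.rpow_mul (by norm_num)] at h10
    norm_num at h10
    exact h10
  have hxb : x ≤ 27/10 := by
    calc x = x ^ (1:ℝ) := (Real.rpow_one x).symm
    _ ≤ x ^ ((27:ℝ)/10) := Real.rpow_le_rpow_of_exponent_le hx1 (by norm_num)
    _ ≤ 27/10 := hkey
  have hbd : ∀ n, z n ≤ 27/10 := by
    intro n
    induction n with
    | zero => rw [hz0]; exact hxb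
    | succ n ih =>
      rw [hzrec n]
      calc x ^ z n ≤ x ^ ((27:ℝ)/10) := Real.rpow_le_rpow_of_exponent_le hx1 ih
      _ ≤ 27/10 := hkey
  have hmono : Monotone z := by
    apply monotone_nat_of_le_succ
    intro n
    induction n with
    | zero =>
      rw [hz0, hzrec 0, hz0]
      calc x = x ^ (1:ℝ) := (Real.rpow_one x).symm
      _ ≤ x ^ x := Real.rpow_le_rpow_of_exponent_le hx1 hx1
    | succ n ih =>
      calc z (n+1) = x ^ z n := hzrec n
      _ ≤ x ^ z (n+1) := Real.rpow_le_rpow_of_exponent_le hx1 ih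
      _ = z (n+2) := (hzrec (n+1)).symm
  have hbdd : BddAbove (Set.range z) := ⟨27/10, by rintro _ ⟨n, rfl⟩; exact hbd n⟩
  have hzt : Filter.Tendsto z Filter.atTop (nhds (⨆ n, z n)) :=
    tendsto_atTop_ciSup hmono hbdd
  set L := ⨆ n, z n with hL
  have hLb : L ≤ 27/10 := ciSup_le hbd
  have hcont : Continuous (fun t : ℝ => x ^ t) := by
    have heq : (fun t : ℝ => x ^ t) = fun t => Real.exp (Real.log x * t) := by
      funext t; rw [Real.rpow_def_of_pos hx0]
    rw [heq]
    exact Real.continuous_exp.comp (continuous_const.mul continuous_id)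
  have h2 : Filter.Tendsto (fun n => x ^ z n) Filter.atTop (nhds (x ^ L)) :=
    (hcont.tendsto L).comp hzt
  have h3 : Filter.Tendsto (fun n => z (n + 1)) Filter.atTop (nhds L) :=
    hzt.comp (Filter.tendsto_add_atTop_nat 1)
  have hfix : x ^ L = L := by
    refine tendsto_nhds_unique h2 ?_
    have : (fun n => x ^ z n) = fun n => z (n + 1) := by
      funext n; exact (hzrec n).symm
    rw [this]; exact h3
  have he : (2.7182818283 : ℝ) < Real.exp 1 := Real.exp_one_gt_d9
  refine ⟨L, ?_, hfix, by linarith, by intro h; rw [h] at hLb; norm_num at hLb⟩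
  exact (Filter.tendsto_add_atTop_iff_nat 1).mp hzt
end

section
/- If x > e^{1/e}, then x^y > y for every real y; in particular the equation x^y = y has no real solution (the map t ↦ x^t has no fixed point). -/
/-- If `x > e^(1/e)`, then `x^y > y` for every real `y`; in particular the
equation `x^y = y` has no real solution. -/
theorem no_fixed_point_of_gt_exp_one_div_e
    (x : ℝ) (hx : Real.exp 1 ^ (1 / Real.exp 1) < x) :
    (∀ y : ℝ, y < x ^ y) ∧ ¬∃ y : ℝ, x ^ y = y := by
  have hx' : Real.exp (1 / Real.exp 1) < x := by rwa [Real.exp_one_rpow] at hx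
  have hx0 : (0:ℝ) < x := lt_trans (Real.exp_pos _) hx'
  have hln : 1 / Real.exp 1 < Real.log x :=
    (Real.lt_log_iff_exp_lt hx0).mpr hx'
  have hE : (0:ℝ) < Real.exp 1 := Real.exp_pos 1
  have main : ∀ y : ℝ, y < x ^ y := by
    intro y
    by_cases hy : y ≤ 0
    · exact lt_of_le_of_lt hy (Real.rpow_pos_of_pos hx0 y)
    · push_neg at hy
      rw [Real.rpow_def_of_pos hx0]
      have key : Real.exp 1 * (Real.log x * y) ≤ Real.exp (Real.log x * y) := by
        have h := Real.add_one_le_exp (y * Real.log x - 1)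
        have h2 : Real.exp (Real.log x * y) = Real.exp 1 * Real.exp (y * Real.log x - 1) := by
          rw [← Real.exp_add]; ring_nf
        nlinarith
      have h3 : Real.exp 1 * (1 / Real.exp 1) < Real.exp 1 * Real.log x :=
        mul_lt_mul_of_pos_left hln hE
      have h4 : Real.exp 1 * (1 / Real.exp 1) = 1 := by field_simp
      nlinarith [mul_lt_mul_of_pos_left h3 hy]
  exact ⟨main, fun ⟨y, hy⟩ => absurd hy (ne_of_gt (main y))⟩
end

section
/- If x > e^{1/e}, then the power tower sequence y₁ = x, y_{n+1} = x^{y_n} tends to +∞ as n → ∞. -/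
/-- If `x > e^(1/e)`, then the power tower sequence `y₁ = x`,
`y_{n+1} = x^(y_n)` tends to `+∞`. -/
theorem powerTower_tendsto_atTop_of_gt_exp_one_div_e
    (x : ℝ) (hx : Real.exp 1 ^ (1 / Real.exp 1) < x)
    (y : ℕ → ℝ) (h1 : y 1 = x)
    (hrec : ∀ n, 1 ≤ n → y (n + 1) = x ^ y n) :
    Filter.Tendsto y Filter.atTop Filter.atTop := by
  rw [Real.exp_one_rpow] at hx
  have hx0 : 0 < x := lt_trans (Real.exp_pos _) hx
  have hlog : 1 / Real.exp 1 < Real.log x := (Real.lt_log_iff_exp_lt hx0).mpr hx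
  set r : ℝ := Real.exp 1 * Real.log x with hr_def
  have hr1 : 1 < r := by
    have h := (mul_lt_mul_iff_right₀ (Real.exp_pos 1)).mpr hlog
    rwa [mul_one_div, div_self (ne_of_gt (Real.exp_pos 1))] at h
  have hr0 : 0 < r := lt_trans one_pos hr1
  -- key inequality: x ^ t ≥ r * t for all t
  have key : ∀ t : ℝ, r * t ≤ x ^ t := by
    intro t
    rw [Real.rpow_def_of_pos hx0]
    have h1' : t * Real.log x ≤ Real.exp (t * Real.log x - 1) := by
      have := Real.add_one_le_exp (t * Real.log x - 1)
      linarith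
    calc r * t = Real.exp 1 * (t * Real.log x) := by ring
      _ ≤ Real.exp 1 * Real.exp (t * Real.log x - 1) := by
          exact mul_le_mul_of_nonneg_left h1' (le_of_lt (Real.exp_pos 1))
      _ = Real.exp (Real.log x * t) := by rw [← Real.exp_add]; ring_nf
  -- y (n+1) ≥ x * r ^ n
  have hlb : ∀ n : ℕ, x * r ^ n ≤ y (n + 1) := by
    intro n
    induction n with
    | zero => simp [h1]
    | succ n ih =>
      have hstep : y (n + 2) = x ^ y (n + 1) := hrec (n + 1) (Nat.le_add_left 1 n)
      calc x * r ^ (n + 1) = r * (x * r ^ n) := by ring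
        _ ≤ r * y (n + 1) := by
            exact mul_le_mul_of_nonneg_left ih (le_of_lt hr0)
        _ ≤ x ^ y (n + 1) := key _
        _ = y (n + 2) := hstep.symm
  have hbase : Filter.Tendsto (fun n : ℕ => x * r ^ n) Filter.atTop Filter.atTop :=
    Filter.Tendsto.const_mul_atTop hx0 (tendsto_pow_atTop_atTop_of_one_lt hr1)
  have hshift : Filter.Tendsto (fun n : ℕ => y (n + 1)) Filter.atTop Filter.atTop :=
    Filter.tendsto_atTop_mono hlb hbase
  exact (Filter.tendsto_add_atTop_iff_nat 1).mp hshift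
end

section
/- For x > 1, there exists a real y with x^y = y and x^y · ln x = 1 (the curve z = x^y is tangent to the line z = y) if and only if x = e^{1/e}; in that case the tangency point is y = e, i.e. (e^{1/e})^e = e. -/
/-- For `x > 1`, there exists `y` with `x^y = y` and `x^y * ln x = 1`
(the exponential curve `z = x^y` is tangent to the line `z = y`) if and only
if `x = e^(1/e)`; in that case the tangency point is `y = e`, i.e.
`(e^(1/e))^e = e`. -/
theorem tangency_iff_eq_exp_one_div_e
    (x : ℝ) (hx : 1 < x) :
    ((∃ y : ℝ, x ^ y = y ∧ x ^ y * Real.log x = 1) ↔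
        x = Real.exp 1 ^ (1 / Real.exp 1)) ∧
      (x = Real.exp 1 ^ (1 / Real.exp 1) →
        ∀ y : ℝ, x ^ y = y ∧ x ^ y * Real.log x = 1 → y = Real.exp 1) ∧
      (Real.exp 1 ^ (1 / Real.exp 1)) ^ Real.exp 1 = Real.exp 1 := by
  have hxpos : (0 : ℝ) < x := lt_trans one_pos hx
  have he : Real.exp 1 ^ (1 / Real.exp 1) = Real.exp (1 / Real.exp 1) :=
    Real.exp_one_rpow _
  have hepos : (0 : ℝ) < Real.exp 1 := Real.exp_pos 1
  -- key: from the two tangency equations, x ^ y = exp 1 and y = exp 1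
  have key : ∀ y : ℝ, x ^ y = y → x ^ y * Real.log x = 1 → y = Real.exp 1 := by
    intro y h1 h2
    have hlog : Real.log (x ^ y) = y * Real.log x := Real.log_rpow hxpos y
    have h1' : Real.log (x ^ y) = 1 := by
      rw [hlog, ← h1]; exact h2
    have : x ^ y = Real.exp 1 := by
      rw [← Real.exp_log (Real.rpow_pos_of_pos hxpos y), h1']
    rw [← h1, this]
  refine ⟨⟨?_, ?_⟩, ?_, ?_⟩
  · rintro ⟨y, h1, h2⟩
    have hy := key y h1 h2
    have hxy : x ^ y = Real.exp 1 := by rw [h1, hy]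
    have hlogx : Real.log x = 1 / Real.exp 1 := by
      rw [hxy] at h2
      field_simp at h2 ⊢
      linarith
    rw [he, ← hlogx, Real.exp_log hxpos]
  · intro hxe
    refine ⟨Real.exp 1, ?_, ?_⟩
    · rw [hxe, he, ← Real.exp_mul]
      rw [one_div, inv_mul_cancel₀ (ne_of_gt hepos)]
    · rw [hxe, he, ← Real.exp_mul, one_div, inv_mul_cancel₀ (ne_of_gt hepos),
        Real.log_exp]
      exact mul_inv_cancel₀ (ne_of_gt hepos)
  · intro _ y ⟨h1, h2⟩
    exact key y h1 h2
  · rw [he, ← Real.exp_mul, one_div, inv_mul_cancel₀ (ne_of_gt hepos)]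
end

section
/- If 1 < x < e^{1/e}, then the equation x^y = y has exactly two real solutions y; both solutions satisfy y > 1. -/
/-!
`f y = x ^ y - y` is strictly convex since `x ≠ 1`, so it has at most two zeros.
It is positive at `0`, negative at `e` because `x ^ e < (e ^ (1/e)) ^ e = e`, and positive for
large `y`, so the intermediate value theorem gives one zero on each side of `e`.
A fixed point satisfies `y = x ^ y > 0`, hence `y = x ^ y > 1`.
-/

open Real Set Filter

theorem strictConvexOn_rpow_left {b : ℝ} (hb₀ : 0 < b) (hb₁ : b ≠ 1) :
    StrictConvexOn ℝ univ fun y : ℝ => b ^ y := by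
  refine ⟨convex_univ, fun y _ z _ hyz s t hs ht hst => ?_⟩
  have hlog : log b ≠ 0 := log_ne_zero_of_pos_of_ne_one hb₀ hb₁
  simp only [rpow_def_of_pos hb₀, smul_eq_mul, mul_add, mul_left_comm (log b)]
  exact strictConvexOn_exp.2 trivial trivial (by simpa [hlog] using hyz) hs ht hst

theorem StrictConvexOn.eq_or_eq_of_apply_eq {s : Set ℝ} {f : ℝ → ℝ} (hf : StrictConvexOn ℝ s f)
    {a b y : ℝ} (ha : a ∈ s) (hb : b ∈ s) (hy : y ∈ s) (hab : a < b) (hfab : f a = f b)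
    (hfy : f y = f a) : y = a ∨ y = b := by
  by_contra! ⟨hya, hyb⟩
  rcases lt_trichotomy y a with hlt | rfl | hay
  · have := hf.lt_on_openSegment hy hb (hlt.trans hab).ne
      (by rw [openSegment_eq_Ioo (hlt.trans hab)]; exact ⟨hlt, hab⟩)
    simp [hfy, hfab] at this
  · exact hya rfl
  rcases lt_trichotomy y b with hyb' | rfl | hby
  · have := hf.lt_on_openSegment ha hb hab.ne
      (by rw [openSegment_eq_Ioo hab]; exact ⟨hay, hyb'⟩)
    simp [hfy, hfab] at this
  · exact hyb rfl
  · have := hf.lt_on_openSegment ha hy (hab.trans hby).ne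
      (by rw [openSegment_eq_Ioo (hab.trans hby)]; exact ⟨hab, hby⟩)
    simp [hfy, hfab] at this

theorem one_lt_of_rpow_eq_self {x y : ℝ} (hx : 1 < x) (h : x ^ y = y) : 1 < y := by
  have hy : 0 < y := h ▸ rpow_pos_of_pos (zero_lt_one.trans hx) y
  exact h ▸ one_lt_rpow hx hy

theorem rpow_exp_one_lt_exp_one {x : ℝ} (hx₀ : 0 ≤ x) (hx : x < exp 1 ^ (1 / exp 1)) :
    x ^ exp 1 < exp 1 := by
  calc x ^ exp 1 < (exp 1 ^ (1 / exp 1)) ^ exp 1 := rpow_lt_rpow hx₀ hx (exp_pos 1)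
    _ = exp 1 := by rw [← rpow_mul (exp_pos 1).le, one_div_mul_cancel (exp_pos 1).ne', rpow_one]

theorem eventually_lt_rpow_of_one_lt {x : ℝ} (hx : 1 < x) : ∀ᶠ y in atTop, y < x ^ y := by
  filter_upwards [(tendsto_exp_mul_div_rpow_atTop 1 (log x) (log_pos hx)).eventually_gt_atTop 1,
    eventually_gt_atTop 0] with y hy hy₀
  rw [rpow_one, one_lt_div hy₀] at hy
  rwa [rpow_def_of_pos (zero_lt_one.trans hx)]

/-- If `1 < x < e^(1/e)`, then the equation `x^y = y` has exactly two real
solutions, and both satisfy `y > 1`. -/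
theorem two_fixed_points_of_lt_exp_one_div_e
    (x : ℝ) (hx1 : 1 < x) (hx2 : x < Real.exp 1 ^ (1 / Real.exp 1)) :
    ∃ y₁ y₂ : ℝ, y₁ ≠ y₂ ∧ x ^ y₁ = y₁ ∧ x ^ y₂ = y₂ ∧ 1 < y₁ ∧ 1 < y₂ ∧
      ∀ y : ℝ, x ^ y = y → y = y₁ ∨ y = y₂ := by
  set f : ℝ → ℝ := fun y => x ^ y - y
  have hfix : ∀ y, x ^ y = y ↔ f y = 0 := fun y => sub_eq_zero.symm
  have hconv : StrictConvexOn ℝ univ f :=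
    (strictConvexOn_rpow_left (by linarith) hx1.ne').sub_concaveOn (concaveOn_id convex_univ)
  have hcont : Continuous f := (continuous_const_rpow (by positivity)).sub continuous_id
  have hf₀ : 0 < f 0 := by simp [f]
  have hfe : f (exp 1) < 0 := sub_neg.2 (rpow_exp_one_lt_exp_one (by linarith) hx2)
  obtain ⟨Y, hYe, hfY⟩ : ∃ Y, exp 1 < Y ∧ 0 < f Y :=
    ((eventually_gt_atTop (exp 1)).and ((eventually_lt_rpow_of_one_lt hx1).mono
      fun y hy => sub_pos.2 hy)).exists
  obtain ⟨y₁, ⟨-, hy₁e⟩, hy₁⟩ :=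
    intermediate_value_Ioo' (exp_pos 1).le hcont.continuousOn ⟨hfe, hf₀⟩
  obtain ⟨y₂, ⟨hey₂, -⟩, hy₂⟩ := intermediate_value_Ioo hYe.le hcont.continuousOn ⟨hfe, hfY⟩
  have hy₁₂ : y₁ < y₂ := hy₁e.trans hey₂
  have hfix₁ : x ^ y₁ = y₁ := (hfix _).2 hy₁
  have hfix₂ : x ^ y₂ = y₂ := (hfix _).2 hy₂
  refine ⟨y₁, y₂, hy₁₂.ne, hfix₁, hfix₂, one_lt_of_rpow_eq_self hx1 hfix₁,
    one_lt_of_rpow_eq_self hx1 hfix₂, fun y hy => ?_⟩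
  exact hconv.eq_or_eq_of_apply_eq trivial trivial trivial hy₁₂ (hy₁.trans hy₂.symm)
    (((hfix y).1 hy).trans hy₁.symm)
end

section
/- If 1 < x < e^{1/e}, then the power tower sequence y₁ = x, y_{n+1} = x^{y_n} converges to a limit L satisfying x^L = L and 1 < L < e (the smaller of the two fixed points of t ↦ x^t). -/
/-- If `1 < x < e^(1/e)`, then the power tower sequence `y₁ = x`,
`y_{n+1} = x^(y_n)` converges to a limit `L` with `x^L = L` and `1 < L < e`;
moreover `L` is the smaller of the fixed points of `t ↦ x^t`. -/
theorem powerTower_converges_of_lt_exp_one_div_e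
    (x : ℝ) (hx1 : 1 < x) (hx2 : x < Real.exp 1 ^ (1 / Real.exp 1))
    (y : ℕ → ℝ) (h1 : y 1 = x)
    (hrec : ∀ n, 1 ≤ n → y (n + 1) = x ^ y n) :
    ∃ L : ℝ, Filter.Tendsto y Filter.atTop (nhds L) ∧
      x ^ L = L ∧ 1 < L ∧ L < Real.exp 1 ∧
      ∀ y' : ℝ, x ^ y' = y' → L ≤ y' := by
  have hx0 : (0:ℝ) < x := lt_trans one_pos hx1
  set e := Real.exp 1 with he_def
  have hepos : (0:ℝ) < e := Real.exp_pos 1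
  have he1 : (1:ℝ) < e := by have := Real.add_one_le_exp 1; linarith
  have hXe : e ^ (1/e) < e := by
    rw [he_def, Real.exp_one_rpow]
    exact Real.exp_lt_exp.mpr (by
      rw [div_lt_one hepos]; exact he1)
  have hxe : x < e := lt_trans hx2 hXe
  set z : ℕ → ℝ := fun n => y (n + 1) with hz_def
  have hz0 : z 0 = x := h1
  have hzrec : ∀ n, z (n + 1) = x ^ z n := fun n =>
    hrec (n + 1) (Nat.le_add_left 1 n)
  have hpow_e : (e ^ (1/e)) ^ e = e := by
    rw [← Real.rpow_mul hepos.le, one_div_mul_cancel hepos.ne', Real.rpow_one]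
  have hub : ∀ n, z n ≤ e := by
    intro n
    induction n with
    | zero => rw [hz0]; exact hxe.le
    | succ n ih =>
      rw [hzrec]
      have : x ^ z n < e := calc
        x ^ z n ≤ x ^ e := Real.rpow_le_rpow_of_exponent_le hx1.le ih
        _ < (e ^ (1/e)) ^ e := Real.rpow_lt_rpow hx0.le hx2 hepos
        _ = e := hpow_e
      exact this.le
  have hmono : Monotone z := by
    apply monotone_nat_of_le_succ
    intro n
    induction n with
    | zero =>
      rw [hz0, hzrec, hz0]
      calc x = x ^ (1:ℝ) := (Real.rpow_one x).symm
        _ ≤ x ^ x := Real.rpow_le_rpow_of_exponent_le hx1.le hx1.le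
    | succ n ih =>
      rw [hzrec (n+1), hzrec n]
      exact Real.rpow_le_rpow_of_exponent_le hx1.le (hzrec n ▸ ih)
  have hbdd : BddAbove (Set.range z) := ⟨e, by rintro _ ⟨n, rfl⟩; exact hub n⟩
  set L := ⨆ n, z n with hL_def
  have hzconv : Filter.Tendsto z Filter.atTop (nhds L) :=
    tendsto_atTop_ciSup hmono hbdd
  have hyconv : Filter.Tendsto y Filter.atTop (nhds L) :=
    (Filter.tendsto_add_atTop_iff_nat 1).mp hzconv
  have hcont : Continuous fun t : ℝ => x ^ t := by
    have : (fun t : ℝ => x ^ t) = fun t => Real.exp (Real.log x * t) := by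
      funext t; rw [Real.rpow_def_of_pos hx0]
    rw [this]; exact Real.continuous_exp.comp (continuous_const.mul continuous_id)
  have hfix : x ^ L = L := by
    have h2 : Filter.Tendsto (fun n => z (n + 1)) Filter.atTop (nhds L) :=
      (Filter.tendsto_add_atTop_iff_nat 1).mpr hzconv
    have h3 : Filter.Tendsto (fun n => x ^ z n) Filter.atTop (nhds (x ^ L)) :=
      (hcont.tendsto L).comp hzconv
    have h4 : (fun n => z (n + 1)) = fun n => x ^ z n := funext hzrec
    rw [h4] at h2
    exact tendsto_nhds_unique h3 h2
  have hL_ge : x ≤ L := hz0 ▸ le_ciSup hbdd 0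
  have hL1 : 1 < L := lt_of_lt_of_le hx1 hL_ge
  have hLe : L ≤ e := ciSup_le hub
  have hLlt : L < e := by
    rcases lt_or_eq_of_le hLe with h | h
    · exact h
    · exfalso
      have hx_eq : x = e ^ (1/e) := by
        have h5 : x ^ e = e := by rw [← h]; exact hfix
        calc x = (x ^ e) ^ (1/e) := by
              rw [← Real.rpow_mul hx0.le, mul_one_div_cancel hepos.ne', Real.rpow_one]
          _ = e ^ (1/e) := by rw [h5]
      exact absurd hx2 (by rw [← hx_eq]; exact lt_irrefl x)
  refine ⟨L, hyconv, hfix, hL1, hLlt, ?_⟩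
  intro y' hy'
  have hy'pos : 0 < y' := hy' ▸ Real.rpow_pos_of_pos hx0 y'
  have hy'1 : 1 ≤ y' := by
    rw [← hy']
    calc (1:ℝ) = x ^ (0:ℝ) := (Real.rpow_zero x).symm
      _ ≤ x ^ y' := Real.rpow_le_rpow_of_exponent_le hx1.le hy'pos.le
  have hle : ∀ n, z n ≤ y' := by
    intro n
    induction n with
    | zero =>
      rw [hz0, ← hy']
      calc x = x ^ (1:ℝ) := (Real.rpow_one x).symm
        _ ≤ x ^ y' := Real.rpow_le_rpow_of_exponent_le hx1.le hy'1
    | succ n ih =>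
      rw [hzrec, ← hy']
      exact Real.rpow_le_rpow_of_exponent_le hx1.le ih
  exact ciSup_le hle
end

section
/- If e^{-e} ≤ x ≤ e^{1/e}, then the power tower sequence y₁ = x, y_{n+1} = x^{y_n} converges, and its limit L satisfies x^L = L and 1/e ≤ L ≤ e. -/
/-!
For `x ≥ 1` the map `t ↦ x ^ t` is increasing and `x ^ e ≤ e`, so the tower increases to a fixed
point below `e`. For `x < 1` the map is decreasing, so the even terms (iterates of the increasing
map `t ↦ x ^ x ^ t`) converge to a point `a` with `x ^ x ^ a = a`. Putting `b = x ^ a` and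
`c = -log x ≤ e`, the numbers `p = c a`, `q = c b` satisfy `log p + q = log q + p = log c ≤ 1`,
whereas for `p ≠ q` these relations force `log p + q > 1`; hence `a = b` and the odd terms have the
same limit. Finally `log L = L log x ≥ -e L` gives `L ≥ 1 / e`.
-/

open Real Filter Function Set Topology

theorem Filter.Tendsto.of_even_odd {α : Type*} {l : Filter α} {u : ℕ → α}
    (h₀ : Tendsto (fun n => u (2 * n)) atTop l) (h₁ : Tendsto (fun n => u (2 * n + 1)) atTop l) :
    Tendsto u atTop l := by
  intro s hs
  obtain ⟨N₀, hN₀⟩ := eventually_atTop.1 (h₀ hs)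
  obtain ⟨N₁, hN₁⟩ := eventually_atTop.1 (h₁ hs)
  refine mem_atTop_sets.2 ⟨2 * (N₀ + N₁), fun n hn => ?_⟩
  obtain ⟨k, rfl | rfl⟩ := Nat.even_or_odd' n
  · exact hN₀ k (by omega)
  · exact hN₁ k (by omega)

section Iterate

variable {α : Type*} [ConditionallyCompleteLinearOrder α] [TopologicalSpace α] [OrderTopology α]
  {f : α → α} {a : α}

theorem Monotone.exists_tendsto_iterate_of_le_map (hf : Monotone f) (hfc : Continuous f)
    (ha : a ≤ f a) {b : α} (hab : a ≤ b) (hb : f b ≤ b) :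
    ∃ L, a ≤ L ∧ L ≤ b ∧ IsFixedPt f L ∧ Tendsto (fun n => f^[n] a) atTop (𝓝 L) := by
  have hmono := hf.monotone_iterate_of_le_map ha
  have hle : ∀ n, f^[n] a ≤ b := by
    intro n
    induction n with
    | zero => exact hab
    | succ n ih => rw [iterate_succ_apply']; exact (hf ih).trans hb
  have hbdd : BddAbove (range fun n => f^[n] a) := ⟨b, forall_mem_range.2 hle⟩
  have hlim := tendsto_atTop_ciSup hmono hbdd
  exact ⟨_, le_ciSup hbdd 0, ciSup_le hle, isFixedPt_of_tendsto_iterate hlim hfc.continuousAt,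
    hlim⟩

theorem Antitone.exists_tendsto_iterate_of_le_map (hf : Antitone f) (hfc : Continuous f)
    (hcycle : ∀ c, f (f c) = c → f c = c) (ha : a ≤ f a) (ha' : a ≤ f (f a)) :
    ∃ L, IsFixedPt f L ∧ Tendsto (fun n => f^[n] a) atTop (𝓝 L) := by
  obtain ⟨L, -, -, hL, heven⟩ :=
    (hf.comp hf).exists_tendsto_iterate_of_le_map (hfc.comp hfc) ha' ha (hf ha')
  have hfix : IsFixedPt f L := hcycle L hL
  have heven' : Tendsto (fun n => f^[2 * n] a) atTop (𝓝 L) := by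
    simp only [iterate_mul]
    exact heven
  refine ⟨L, hfix, heven'.of_even_odd ?_⟩
  have hodd := (hfc.tendsto L).comp heven'
  rw [hfix.eq] at hodd
  simp only [iterate_succ_apply']
  exact hodd

end Iterate

namespace Real

theorem strictMonoOn_log_sub_self : StrictMonoOn (fun t => log t - t) (Ioc 0 1) := by
  refine strictMonoOn_of_deriv_pos (convex_Ioc 0 1)
    ((continuousOn_log.mono fun t ht => ht.1.ne').sub continuousOn_id) fun t ht => ?_
  rw [interior_Ioc] at ht
  have hd : HasDerivAt (fun t => log t - t) (t⁻¹ - 1) t :=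
    (hasDerivAt_log ht.1.ne').sub (hasDerivAt_id t)
  rw [hd.deriv, sub_pos]
  exact (one_lt_inv₀ ht.1).2 ht.2

theorem exp_add_log_one_sub_lt_one {s : ℝ} (hs₀ : 0 < s) (hs₁ : s < 1) :
    exp s + log (1 - s) < 1 := by
  have hanti : StrictAntiOn (fun u => exp u + log (1 - u)) (Ico 0 1) := by
    refine strictAntiOn_of_deriv_neg (convex_Ico 0 1)
      (continuousOn_exp.add <| (continuousOn_const.sub continuousOn_id).log
        fun u hu => (sub_pos.2 hu.2).ne') fun u hu => ?_
    rw [interior_Ico] at hu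
    have hu' : 0 < 1 - u := sub_pos.2 hu.2
    have hd : HasDerivAt (fun u => exp u + log (1 - u)) (exp u + -1 / (1 - u)) u :=
      (hasDerivAt_exp u).add (((hasDerivAt_id u).const_sub 1).log hu'.ne')
    rw [hd.deriv, neg_div, ← sub_eq_add_neg, sub_neg, lt_div_iff₀ hu']
    calc exp u * (1 - u) < exp u * exp (-u) := by
          gcongr; linarith [add_one_lt_exp (x := -u) (by linarith [hu.1])]
      _ = 1 := by rw [← exp_add, add_neg_cancel, exp_zero]
  simpa using hanti ⟨le_rfl, one_pos⟩ ⟨hs₀.le, hs₁⟩ hs₀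

/-- `log t - t` is increasing on `(0, 1]`, and `exp_add_log_one_sub_lt_one` says that its value at
`1 - log q` is below its value at `q`, which is also its value at `p`; hence `1 - log q < p`. -/
theorem one_lt_log_add_of_lt {p q : ℝ} (hp : 0 < p) (hpq : p < q)
    (h : log p + q = log q + p) : 1 < log q + p := by
  have hψ : log p - p = log q - q := by linarith
  have hq : 1 < q := by
    by_contra! hq
    exact (strictMonoOn_log_sub_self ⟨hp, hpq.le.trans hq⟩ ⟨hp.trans hpq, hq⟩ hpq).ne hψ
  rcases le_or_gt 1 (log q) with hs | hs
  · linarith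
  have hs₀ : 0 < log q := log_pos hq
  by_contra! hle
  have hψle : log p - p ≤ log (1 - log q) - (1 - log q) :=
    strictMonoOn_log_sub_self.monotoneOn ⟨hp, by linarith⟩ ⟨by linarith, by linarith⟩
      (by linarith)
  have := exp_add_log_one_sub_lt_one hs₀ hs
  rw [exp_log (hp.trans hpq)] at this
  linarith

theorem one_lt_log_add_of_ne {p q : ℝ} (hp : 0 < p) (hq : 0 < q) (hne : p ≠ q)
    (h : log p + q = log q + p) : 1 < log p + q := by
  rcases hne.lt_or_gt with hpq | hqp
  · exact h ▸ one_lt_log_add_of_lt hp hpq h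
  · exact one_lt_log_add_of_lt hq hqp h.symm

theorem rpow_eq_self_of_rpow_rpow_eq_self {x a : ℝ} (hx₀ : exp (-exp 1) ≤ x) (hx₁ : x < 1)
    (h : x ^ x ^ a = a) : x ^ a = a := by
  have hx : 0 < x := (exp_pos _).trans_le hx₀
  set b := x ^ a
  set c := -log x
  have hc : 0 < c := neg_pos.2 (log_neg hx hx₁)
  have hlogc : log c ≤ 1 := by
    rw [← log_exp 1]
    exact log_le_log hc (by linarith [(le_log_iff_exp_le hx).2 hx₀])
  have ha : 0 < a := h ▸ rpow_pos_of_pos hx b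
  have hb : 0 < b := rpow_pos_of_pos hx a
  have hloga : log a = -(c * b) := by rw [← h, log_rpow hx]; ring
  have hlogb : log b = -(c * a) := by rw [log_rpow hx]; ring
  have hp : log (c * a) + c * b = log c := by rw [log_mul hc.ne' ha.ne', hloga]; ring
  have hq : log (c * b) + c * a = log c := by rw [log_mul hc.ne' hb.ne', hlogb]; ring
  by_contra hne
  have := one_lt_log_add_of_ne (mul_pos hc ha) (mul_pos hc hb)
    (fun heq => hne (mul_left_cancel₀ hc.ne' heq).symm) (hp.trans hq.symm)
  linarith

theorem one_div_exp_le_of_rpow_eq_self {x L : ℝ} (hx : exp (-exp 1) ≤ x) (hL : x ^ L = L) :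
    1 / exp 1 ≤ L := by
  have hx₀ : 0 < x := (exp_pos _).trans_le hx
  have hL₀ : 0 < L := hL ▸ rpow_pos_of_pos hx₀ L
  rcases lt_or_ge (1 / exp 1) L with h | h
  · exact h.le
  have hlogx : -exp 1 ≤ log x := (le_log_iff_exp_le hx₀).2 hx
  have hLe : L * exp 1 ≤ 1 := (le_div_iff₀ (exp_pos 1)).1 h
  have : -1 ≤ log L := by
    rw [← hL, log_rpow hx₀]
    nlinarith [mul_le_mul_of_nonneg_left hlogx hL₀.le]
  rw [one_div, ← exp_neg]
  exact (le_log_iff_exp_le hL₀).1 this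

theorem rpow_exp_one_le_exp_one {x : ℝ} (hx₀ : 0 ≤ x) (hx : x ≤ exp 1 ^ (1 / exp 1)) :
    x ^ exp 1 ≤ exp 1 := by
  calc x ^ exp 1 ≤ (exp 1 ^ (1 / exp 1)) ^ exp 1 := rpow_le_rpow hx₀ hx (exp_pos 1).le
    _ = exp 1 := by rw [← rpow_mul (exp_pos 1).le, one_div_mul_cancel (exp_ne_zero 1), rpow_one]

end Real

/-- If `e^(-e) ≤ x ≤ e^(1/e)`, then the power tower sequence `y₁ = x`,
`y_{n+1} = x^(y_n)` converges, and its limit `L` satisfies `x^L = L` and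
`1/e ≤ L ≤ e`. -/
theorem powerTower_converges_on_interval
    (x : ℝ) (hx1 : Real.exp 1 ^ (-Real.exp 1) ≤ x)
    (hx2 : x ≤ Real.exp 1 ^ (1 / Real.exp 1))
    (y : ℕ → ℝ) (h1 : y 1 = x)
    (hrec : ∀ n, 1 ≤ n → y (n + 1) = x ^ y n) :
    ∃ L : ℝ, Filter.Tendsto y Filter.atTop (nhds L) ∧
      x ^ L = L ∧ 1 / Real.exp 1 ≤ L ∧ L ≤ Real.exp 1 := by
  rw [exp_one_rpow] at hx1
  have hx : 0 < x := (exp_pos _).trans_le hx1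
  have hy : ∀ n, y (n + 1) = (x ^ ·)^[n] x := by
    intro n
    induction n with
    | zero => exact h1
    | succ n ih => rw [hrec _ n.succ_pos, ih, iterate_succ_apply']
  suffices ∃ L, x ^ L = L ∧ L ≤ exp 1 ∧ Tendsto (fun n => (x ^ ·)^[n] x) atTop (𝓝 L) by
    obtain ⟨L, hfix, hLe, hlim⟩ := this
    refine ⟨L, (tendsto_add_atTop_iff_nat 1).1 ?_, hfix, one_div_exp_le_of_rpow_eq_self hx1 hfix,
      hLe⟩
    simpa only [hy] using hlim
  rcases le_or_gt 1 x with hx₁ | hx₁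
  · have hxe := rpow_exp_one_le_exp_one hx.le hx2
    obtain ⟨L, -, hLe, hfix, hlim⟩ :=
      (monotone_rpow_of_base_ge_one hx₁).exists_tendsto_iterate_of_le_map
        (continuous_const_rpow hx.ne') (self_le_rpow_of_one_le hx₁ hx₁)
        ((self_le_rpow_of_one_le hx₁ (one_le_exp zero_le_one)).trans hxe) hxe
    exact ⟨L, hfix, hLe, hlim⟩
  · obtain ⟨L, hfix, hlim⟩ :=
      (antitone_rpow_of_base_le_one hx hx₁.le).exists_tendsto_iterate_of_le_map
        (continuous_const_rpow hx.ne') (fun _ => rpow_eq_self_of_rpow_rpow_eq_self hx1 hx₁)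
        (self_le_rpow_of_le_one hx.le hx₁.le hx₁.le)
        (self_le_rpow_of_le_one hx.le hx₁.le (rpow_le_one hx.le hx₁.le hx.le))
    have hL₁ : L ≤ 1 := calc
      L = x ^ L := hfix.symm
      _ ≤ 1 := rpow_le_one hx.le hx₁.le (hfix ▸ rpow_nonneg hx.le L)
    exact ⟨L, hfix, hL₁.trans (one_le_exp zero_le_one), hlim⟩
end

section
/- Let x > 0 and let y₁, y₂ > 0 form a 2-cycle of the map t ↦ x^t, i.e. x^{y₁} = y₂ and x^{y₂} = y₁. Then y₁^{y₁} = y₂^{y₂} (equivalently, y₁ · ln y₁ = y₂ · ln y₂). -/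
/-- If `y₁, y₂ > 0` form a 2-cycle of the map `t ↦ x^t`
(i.e. `x^(y₁) = y₂` and `x^(y₂) = y₁`), then `y₁^(y₁) = y₂^(y₂)`
(equivalently, `y₁ · ln y₁ = y₂ · ln y₂`). -/
theorem two_cycle_identity
    (x y₁ y₂ : ℝ) (hx : 0 < x) (hy₁ : 0 < y₁) (hy₂ : 0 < y₂)
    (h12 : x ^ y₁ = y₂) (h21 : x ^ y₂ = y₁) :
    y₁ ^ y₁ = y₂ ^ y₂ ∧ y₁ * Real.log y₁ = y₂ * Real.log y₂ := by
  have key : y₁ ^ y₁ = y₂ ^ y₂ := by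
    calc y₁ ^ y₁ = (x ^ y₂) ^ y₁ := by rw [h21]
    _ = x ^ (y₂ * y₁) := by rw [← Real.rpow_mul hx.le]
    _ = (x ^ y₁) ^ y₂ := by rw [← Real.rpow_mul hx.le, mul_comm]
    _ = y₂ ^ y₂ := by rw [h12]
  refine ⟨key, ?_⟩
  have := congrArg Real.log key
  rw [Real.log_rpow hy₁, Real.log_rpow hy₂, mul_comm] at this; linarith [this]
end

section
/- Let p > 0 with p ≠ 1, and let y₁ > 0 and y₂ = p · y₁ satisfy y₁ · ln y₁ = y₂ · ln y₂. Then y₁ = p^{p/(1−p)} and y₂ = p^{1/(1−p)}. -/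
/-!
Since `y₂ = p y₁`, dividing the cycle identity by `y₁` makes it linear in `log y₁`:
`log y₁ = p (log p + log y₁)`, i.e. `(1 - p) log y₁ = p log p`. Exponentiating gives `y₁`,
and `y₂ = p · p^(p/(1-p)) = p^(1/(1-p))`.
-/

namespace Real

lemma one_sub_mul_log_eq_of_mul_log_eq {p y : ℝ} (hp : p ≠ 0) (hy : y ≠ 0)
    (h : y * log y = p * y * log (p * y)) : (1 - p) * log y = p * log p := by
  rw [log_mul hp hy] at h
  have h' : y * ((1 - p) * log y - p * log p) = 0 := by linear_combination h
  linear_combination (mul_eq_zero.mp h').resolve_left hy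

lemma eq_rpow_div_one_sub_of_mul_log_eq {p y : ℝ} (hp : 0 < p) (hp1 : p ≠ 1) (hy : 0 < y)
    (h : y * log y = p * y * log (p * y)) : y = p ^ (p / (1 - p)) := by
  have h1p : 1 - p ≠ 0 := sub_ne_zero.mpr hp1.symm
  have hlog : log y = log p * (p / (1 - p)) := by
    rw [mul_div_assoc', eq_div_iff h1p, mul_comm, one_sub_mul_log_eq_of_mul_log_eq hp.ne' hy.ne' h,
      mul_comm]
  rw [rpow_def_of_pos hp, ← hlog, exp_log hy]

lemma mul_rpow_div_one_sub {p : ℝ} (hp : 0 < p) (hp1 : p ≠ 1) :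
    p * p ^ (p / (1 - p)) = p ^ (1 / (1 - p)) := by
  have h1p : 1 - p ≠ 0 := sub_ne_zero.mpr hp1.symm
  have hexp : 1 / (1 - p) = 1 + p / (1 - p) := by field_simp; ring
  rw [hexp, rpow_add hp, rpow_one]

end Real

/-- Let `p > 0`, `p ≠ 1`, and let `y₁ > 0` and `y₂ = p·y₁` satisfy
`y₁ · ln y₁ = y₂ · ln y₂`. Then `y₁ = p^(p/(1-p))` and `y₂ = p^(1/(1-p))`. -/
theorem two_cycle_values
    (p y₁ y₂ : ℝ) (hp : 0 < p) (hp1 : p ≠ 1) (hy₁ : 0 < y₁)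
    (hrel : y₂ = p * y₁) (hcycle : y₁ * Real.log y₁ = y₂ * Real.log y₂) :
    y₁ = p ^ (p / (1 - p)) ∧ y₂ = p ^ (1 / (1 - p)) := by
  subst hrel
  have hy₁_eq := Real.eq_rpow_div_one_sub_of_mul_log_eq hp hp1 hy₁ hcycle
  refine ⟨hy₁_eq, ?_⟩
  rw [hy₁_eq, Real.mul_rpow_div_one_sub hp hp1]
end
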